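/- arXiv:1707.07109 — 4 statements merged into one kernel-verified Lean document; each statement's English description precedes it below -/
import Mathlib

section
/- Let C ≥ 0, T > 0, and let 𝓕, 𝓖 : ℝ → ℝ be non-decreasing. Suppose f₁, f₂, g₁, g₂ ∈ C¹([0,T)) satisfy f₂'(t) + C f₂(t) ≥ 𝓖(g₂(t)), g₂'(t) + C g₂(t) ≥ 𝓕(f₂(t)), f₁'(t) + C f₁(t) ≤ 𝓖(g₁(t)), g₁'(t) + C g₁(t) ≤ 𝓕(f₁(t)) for all t ∈ [0,T), together with f₂(0) > f₁(0) and g₂(0) > g₁(0). Then f₂(t) > f₁(t) and g₂(t) > g₁(t) for all t ∈ [0,T). -/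
open Real Set

/-- Auxiliary Grönwall-type comparison: if `a' + C a ≤ b' + C b` on `(0, τ)` and
`a 0 < b 0`, then `a τ < b τ`. -/
lemma aux_mono (C τ : ℝ) (hτ : 0 < τ) (a b a' b' : ℝ → ℝ)
    (hda : ∀ t ∈ Set.Icc (0:ℝ) τ, HasDerivAt a (a' t) t)
    (hdb : ∀ t ∈ Set.Icc (0:ℝ) τ, HasDerivAt b (b' t) t)
    (hineq : ∀ t ∈ Set.Ioo (0:ℝ) τ, a' t + C * a t ≤ b' t + C * b t)
    (h0 : a 0 < b 0) : a τ < b τ := by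
  set u : ℝ → ℝ := fun t => Real.exp (C * t) * (b t - a t) with hu
  have hud : ∀ x ∈ Set.Icc (0:ℝ) τ,
      HasDerivAt u (Real.exp (C * x) * ((b' x + C * b x) - (a' x + C * a x))) x := by
    intro x hx
    have h1 : HasDerivAt (fun t => Real.exp (C * t)) (Real.exp (C * x) * C) x := by
      have h0 : HasDerivAt (fun t : ℝ => C * t) (C * 1) x := (hasDerivAt_id x).const_mul C
      have h0' := (Real.hasDerivAt_exp (C * x)).comp x h0
      rw [mul_one] at h0'
      exact h0'
    have h2 := (hdb x hx).sub (hda x hx)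
    have h3 := h1.mul h2
    refine h3.congr_deriv ?_
    simp only [Pi.sub_apply]
    ring
  have hmono : MonotoneOn u (Set.Icc 0 τ) := by
    apply monotoneOn_of_deriv_nonneg (convex_Icc 0 τ)
    · intro x hx
      exact (hud x hx).continuousAt.continuousWithinAt
    · intro x hx
      rw [interior_Icc] at hx
      exact (hud x (Set.Ioo_subset_Icc_self hx)).differentiableAt.differentiableWithinAt
    · intro x hx
      rw [interior_Icc] at hx
      rw [(hud x (Set.Ioo_subset_Icc_self hx)).deriv]
      have h4 := hineq x hx
      have := Real.exp_pos (C * x)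
      nlinarith
  have h5 : u 0 ≤ u τ :=
    hmono (Set.left_mem_Icc.mpr hτ.le) (Set.right_mem_Icc.mpr hτ.le) hτ.le
  have h6 : u 0 = b 0 - a 0 := by simp [hu]
  have h7 : 0 < u τ := by rw [h6] at h5; linarith
  have h8 : 0 < Real.exp (C * τ) * (b τ - a τ) := by simpa [hu] using h7
  nlinarith [Real.exp_pos (C * τ)]

theorem stmt_2 (C T : ℝ) (hC : 0 ≤ C) (hT : 0 < T)
    (F G : ℝ → ℝ) (hF : Monotone F) (hG : Monotone G)
    (f₁ f₂ g₁ g₂ f₁' f₂' g₁' g₂' : ℝ → ℝ)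
    (hder₁ : ∀ t ∈ Set.Ico (0 : ℝ) T, HasDerivAt f₁ (f₁' t) t ∧ HasDerivAt g₁ (g₁' t) t)
    (hder₂ : ∀ t ∈ Set.Ico (0 : ℝ) T, HasDerivAt f₂ (f₂' t) t ∧ HasDerivAt g₂ (g₂' t) t)
    (hcont : ContinuousOn f₁' (Set.Ico 0 T) ∧ ContinuousOn g₁' (Set.Ico 0 T) ∧
      ContinuousOn f₂' (Set.Ico 0 T) ∧ ContinuousOn g₂' (Set.Ico 0 T))
    (hODI₂ : ∀ t ∈ Set.Ico (0 : ℝ) T,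
      G (g₂ t) ≤ f₂' t + C * f₂ t ∧ F (f₂ t) ≤ g₂' t + C * g₂ t)
    (hODI₁ : ∀ t ∈ Set.Ico (0 : ℝ) T,
      f₁' t + C * f₁ t ≤ G (g₁ t) ∧ g₁' t + C * g₁ t ≤ F (f₁ t))
    (hf0 : f₁ 0 < f₂ 0) (hg0 : g₁ 0 < g₂ 0) :
    ∀ t ∈ Set.Ico (0 : ℝ) T, f₁ t < f₂ t ∧ g₁ t < g₂ t := by
  by_contra hcon
  push_neg at hcon
  obtain ⟨t₀, ht₀, hbad⟩ := hcon
  -- the "bad" set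
  set S : Set ℝ := {t | t ∈ Set.Icc 0 t₀ ∧ (f₂ t ≤ f₁ t ∨ g₂ t ≤ g₁ t)} with hSdef
  have hS0 : t₀ ∈ S := by
    refine ⟨Set.right_mem_Icc.mpr ht₀.1, ?_⟩
    by_cases hf : f₁ t₀ < f₂ t₀
    · exact Or.inr (hbad hf)
    · exact Or.inl (not_lt.mp hf)
  have hbdd : BddBelow S := ⟨0, fun x hx => hx.1.1⟩
  have hne : S.Nonempty := ⟨t₀, hS0⟩
  set τ := sInf S with hτdef
  have hτcl : τ ∈ closure S := csInf_mem_closure hne hbdd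
  have hτIcc : τ ∈ Set.Icc 0 t₀ := by
    have hsub : S ⊆ Set.Icc 0 t₀ := fun x hx => hx.1
    have := closure_mono hsub hτcl
    rwa [isClosed_Icc.closure_eq] at this
  have hτT : τ ∈ Set.Ico 0 T := ⟨hτIcc.1, lt_of_le_of_lt hτIcc.2 ht₀.2⟩
  -- continuity of all functions at points of [0,T)
  have hca : ∀ s ∈ Set.Ico (0:ℝ) T, ContinuousAt f₁ s ∧ ContinuousAt f₂ s ∧
      ContinuousAt g₁ s ∧ ContinuousAt g₂ s := fun s hs =>
    ⟨(hder₁ s hs).1.continuousAt, (hder₂ s hs).1.continuousAt,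
     (hder₁ s hs).2.continuousAt, (hder₂ s hs).2.continuousAt⟩
  -- the inf is itself a bad point
  have hτS : f₂ τ ≤ f₁ τ ∨ g₂ τ ≤ g₁ τ := by
    by_contra hno
    push_neg at hno
    obtain ⟨hc1, hc2, hc3, hc4⟩ := hca τ hτT
    have hev1 : ∀ᶠ s in nhds τ, f₁ s < f₂ s := hc1.eventually_lt hc2 hno.1
    have hev2 : ∀ᶠ s in nhds τ, g₁ s < g₂ s := hc3.eventually_lt hc4 hno.2
    have hev := hev1.and hev2
    rw [mem_closure_iff_nhds] at hτcl
    obtain ⟨s, hs1, hs2⟩ := hτcl _ hev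
    rcases hs2.2 with h | h
    · exact absurd hs1.1 (not_lt.mpr h)
    · exact absurd hs1.2 (not_lt.mpr h)
  have hτpos : 0 < τ := by
    rcases hτIcc.1.lt_or_eq with h | h
    · exact h
    · exfalso
      rw [← h] at hτS
      rcases hτS with h' | h'
      · exact absurd hf0 (not_lt.mpr h')
      · exact absurd hg0 (not_lt.mpr h')
  -- strict inequalities before τ
  have hstrict : ∀ s, 0 ≤ s → s < τ → f₁ s < f₂ s ∧ g₁ s < g₂ s := by
    intro s hs0 hsτ
    have hnS : s ∉ S := fun hmem => absurd (csInf_le hbdd hmem) (not_le.mpr hsτ)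
    have hsIcc : s ∈ Set.Icc 0 t₀ := ⟨hs0, le_trans hsτ.le hτIcc.2⟩
    by_contra hc
    apply hnS
    refine ⟨hsIcc, ?_⟩
    rcases not_and_or.mp hc with h | h
    · exact Or.inl (not_lt.mp h)
    · exact Or.inr (not_lt.mp h)
  have hsubT : Set.Icc (0:ℝ) τ ⊆ Set.Ico 0 T := fun x hx =>
    ⟨hx.1, lt_of_le_of_lt hx.2 (lt_of_le_of_lt hτIcc.2 ht₀.2)⟩
  -- apply the Grönwall lemma to f
  have hfτ : f₁ τ < f₂ τ := by
    apply aux_mono C τ hτpos f₁ f₂ f₁' f₂'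
      (fun t ht => (hder₁ t (hsubT ht)).1) (fun t ht => (hder₂ t (hsubT ht)).1)
      _ hf0
    intro t ht
    have htT : t ∈ Set.Ico (0:ℝ) T := hsubT (Set.Ioo_subset_Icc_self ht)
    have hg : g₁ t < g₂ t := (hstrict t ht.1.le ht.2).2
    calc f₁' t + C * f₁ t ≤ G (g₁ t) := (hODI₁ t htT).1
      _ ≤ G (g₂ t) := hG hg.le
      _ ≤ f₂' t + C * f₂ t := (hODI₂ t htT).1
  -- apply the Grönwall lemma to g
  have hgτ : g₁ τ < g₂ τ := by
    apply aux_mono C τ hτpos g₁ g₂ g₁' g₂'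
      (fun t ht => (hder₁ t (hsubT ht)).2) (fun t ht => (hder₂ t (hsubT ht)).2)
      _ hg0
    intro t ht
    have htT : t ∈ Set.Ico (0:ℝ) T := hsubT (Set.Ioo_subset_Icc_self ht)
    have hf : f₁ t < f₂ t := (hstrict t ht.1.le ht.2).1
    calc g₁' t + C * g₁ t ≤ F (f₁ t) := (hODI₁ t htT).2
      _ ≤ F (f₂ t) := hF hf.le
      _ ≤ g₂' t + C * g₂ t := (hODI₂ t htT).2
  rcases hτS with h | h
  · exact absurd hfτ (not_lt.mpr h)
  · exact absurd hgτ (not_lt.mpr h)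
end

section
/- Let f₀, g₀ > 0, C_p, C_q > 0, p, q > 0 with pq > 1, and let (f, g) be non-negative C¹ solutions on [0, T) of f' = (p+1) C_p g^p, g' = (q+1) C_q f^q with f(0) = f₀, g(0) = g₀. If C_q f₀^{q+1} ≥ C_p g₀^{p+1}, then for all t ∈ [0, T): g(t) ≥ { C_p^{(pq-1)/((p+1)(q+1))} C_q^{-(pq-1)/((p+1)(q+1))} f₀^{-(pq-1)/(p+1)} - 2^{-pq/(q+1)} (pq-1) C_p^{q/(q+1)} C_q^{1/(q+1)} t }^{-(q+1)/(pq-1)} - ( C_p^{-1} C_q f₀^{q+1} - g₀^{p+1} )^{1/(p+1)}. -/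
open Real Set

lemma aux_superadd {a b r : ℝ} (ha : 0 ≤ a) (hb : 0 ≤ b) (hr : 1 ≤ r) :
    a ^ r + b ^ r ≤ (a + b) ^ r := by
  have h := NNReal.add_rpow_le_rpow_add a.toNNReal b.toNNReal hr
  have h2 := NNReal.coe_le_coe.mpr h
  rw [NNReal.coe_add, NNReal.coe_rpow, NNReal.coe_rpow, NNReal.coe_rpow, NNReal.coe_add,
    Real.coe_toNNReal a ha, Real.coe_toNNReal b hb] at h2
  exact h2

lemma aux_convhalf {a b r : ℝ} (ha : 0 ≤ a) (hb : 0 ≤ b) (hr : 1 ≤ r) :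
    (a + b) ^ r ≤ 2 ^ (r - 1) * (a ^ r + b ^ r) := by
  have hc := (convexOn_rpow hr).2 (Set.mem_Ici.mpr ha) (Set.mem_Ici.mpr hb)
      (by norm_num : (0:ℝ) ≤ 1/2) (by norm_num : (0:ℝ) ≤ 1/2) (by norm_num)
  simp only [smul_eq_mul] at hc
  have he : a + b = 2 * (1/2 * a + 1/2 * b) := by ring
  rw [he, Real.mul_rpow (by norm_num) (by positivity)]
  calc 2 ^ r * (1/2*a + 1/2*b) ^ r ≤ 2 ^ r * (1/2 * a^r + 1/2 * b^r) :=
        mul_le_mul_of_nonneg_left hc (Real.rpow_nonneg (by norm_num) r)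
    _ = 2 ^ r * 2⁻¹ * (a^r + b^r) := by ring
    _ = 2 ^ (r-1) * (a^r + b^r) := by
        rw [Real.rpow_sub (by norm_num), Real.rpow_one]; ring

theorem stmt_4 (f₀ g₀ Cp Cq T p q : ℝ)
    (hf₀ : 0 < f₀) (hg₀ : 0 < g₀) (hCp : 0 < Cp) (hCq : 0 < Cq) (hT : 0 < T)
    (hp : 0 < p) (hq : 0 < q) (hpq : 1 < p * q)
    (f g : ℝ → ℝ)
    (hfnn : ∀ t ∈ Set.Ico (0 : ℝ) T, 0 ≤ f t) (hgnn : ∀ t ∈ Set.Ico (0 : ℝ) T, 0 ≤ g t)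
    (hf' : ∀ t ∈ Set.Ico (0 : ℝ) T, HasDerivAt f ((p + 1) * Cp * g t ^ p) t)
    (hg' : ∀ t ∈ Set.Ico (0 : ℝ) T, HasDerivAt g ((q + 1) * Cq * f t ^ q) t)
    (hf0 : f 0 = f₀) (hg0 : g 0 = g₀)
    (hinit : Cp * g₀ ^ (p + 1) ≤ Cq * f₀ ^ (q + 1)) :
    ∀ t ∈ Set.Ico (0 : ℝ) T,
      (Cp ^ ((p * q - 1) / ((p + 1) * (q + 1))) * Cq ^ (-((p * q - 1) / ((p + 1) * (q + 1)))) *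
          f₀ ^ (-((p * q - 1) / (p + 1)))
        - 2 ^ (-(p * q) / (q + 1)) * (p * q - 1) * Cp ^ (q / (q + 1)) * Cq ^ ((1 : ℝ) / (q + 1)) * t)
          ^ (-((q + 1) / (p * q - 1)))
      - (Cp⁻¹ * Cq * f₀ ^ (q + 1) - g₀ ^ (p + 1)) ^ ((1 : ℝ) / (p + 1)) ≤ g t := by
  have hp1 : (0:ℝ) < p + 1 := by linarith
  have hq1 : (0:ℝ) < q + 1 := by linarith
  have hβ0 : (0:ℝ) < p*q - 1 := by linarith
  set β : ℝ := (p*q - 1)/(q+1) with hβdef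
  have hβ : 0 < β := div_pos hβ0 hq1
  set D := Set.Ico (0:ℝ) T with hDdef
  have h0D : (0:ℝ) ∈ D := ⟨le_refl 0, hT⟩
  have hconv : Convex ℝ D := convex_Ico 0 T
  have hintD : interior D = Set.Ioo 0 T := interior_Ico
  have hsub : Set.Ioo (0:ℝ) T ⊆ D := Set.Ioo_subset_Ico_self
  -- g is monotone
  have hgmono : MonotoneOn g D := by
    apply monotoneOn_of_deriv_nonneg hconv
      (fun x hx => (hg' x hx).continuousAt.continuousWithinAt)
    · rw [hintD]; exact fun x hx => ((hg' x (hsub hx)).differentiableAt).differentiableWithinAt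
    · rw [hintD]; intro x hx
      rw [(hg' x (hsub hx)).deriv]
      exact mul_nonneg (by positivity) (Real.rpow_nonneg (hfnn x (hsub hx)) q)
  have hg₀le : ∀ x ∈ D, g₀ ≤ g x := fun x hx => by
    have := hgmono h0D hx hx.1; rwa [hg0] at this
  -- conservation of energy
  have hV' : ∀ x ∈ D, HasDerivAt (fun s => Cq * f s ^ (q+1) - Cp * g s ^ (p+1)) 0 x := by
    intro x hx
    have h1 := (((hf' x hx).rpow_const (Or.inr (by linarith : (1:ℝ) ≤ q+1))).const_mul Cq)
    have h2 := (((hg' x hx).rpow_const (Or.inr (by linarith : (1:ℝ) ≤ p+1))).const_mul Cp)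
    have h3 := h1.fun_sub h2
    refine h3.congr_deriv ?_
    have e1 : q + 1 - 1 = q := by ring
    have e2 : p + 1 - 1 = p := by ring
    rw [e1, e2]; ring
  have hVconst : ∀ x ∈ D,
      Cq * f x ^ (q+1) - Cp * g x ^ (p+1) = Cq * f₀ ^ (q+1) - Cp * g₀ ^ (p+1) := by
    intro x hx
    have hc : ContinuousOn (fun s => Cq * f s ^ (q+1) - Cp * g s ^ (p+1)) D :=
      fun y hy => (hV' y hy).continuousAt.continuousWithinAt
    have hd : DifferentiableOn ℝ (fun s => Cq * f s ^ (q+1) - Cp * g s ^ (p+1)) (interior D) := by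
      rw [hintD]; exact fun y hy => ((hV' y (hsub hy)).differentiableAt).differentiableWithinAt
    have hmono := monotoneOn_of_deriv_nonneg hconv hc hd (by
      rw [hintD]; intro y hy; rw [(hV' y (hsub hy)).deriv])
    have hanti := antitoneOn_of_deriv_nonpos hconv hc hd (by
      rw [hintD]; intro y hy; rw [(hV' y (hsub hy)).deriv])
    have h1 := hmono h0D hx hx.1
    have h2 := hanti h0D hx hx.1
    simp only [hf0, hg0] at h1 h2
    linarith
  -- the shift A
  set A : ℝ := (Cp⁻¹ * Cq * f₀ ^ (q + 1) - g₀ ^ (p + 1)) ^ ((1:ℝ)/(p+1)) with hAdef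
  have hAbase : 0 ≤ Cp⁻¹ * Cq * f₀ ^ (q + 1) - g₀ ^ (p + 1) := by
    rw [sub_nonneg, ← mul_le_mul_iff_right₀ hCp]
    calc Cp * g₀^(p+1) ≤ Cq * f₀^(q+1) := hinit
    _ = Cp * (Cp⁻¹ * Cq * f₀^(q+1)) := by field_simp
  have hA : 0 ≤ A := Real.rpow_nonneg hAbase _
  have hApow : A ^ (p+1) = Cp⁻¹ * Cq * f₀ ^ (q + 1) - g₀ ^ (p + 1) := by
    rw [hAdef, ← Real.rpow_mul hAbase, one_div, inv_mul_cancel₀ (ne_of_gt hp1), Real.rpow_one]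
  have consA : ∀ x ∈ D, Cq * f x ^ (q+1) = Cp * (g x ^ (p+1) + A ^ (p+1)) := by
    intro x hx
    have h := hVconst x hx
    have h2 : Cp * (Cp⁻¹ * Cq * f₀^(q+1) - g₀^(p+1)) = Cq*f₀^(q+1) - Cp*g₀^(p+1) := by
      field_simp
    rw [hApow, mul_add, h2]
    linarith
  -- key pointwise lower bound on f x ^ q
  set c2 : ℝ := (Cp/Cq) ^ (q/(q+1)) * 2 ^ (-(p*q)/(q+1)) with hc2def
  have hkey : ∀ x ∈ D, c2 * (g x + A) ^ ((p+1)*(q/(q+1))) ≤ f x ^ q := by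
    intro x hx
    have hfx : 0 ≤ f x := hfnn x hx
    have hgx : 0 ≤ g x := hgnn x hx
    have hgA : (0:ℝ) < g x + A := by have := hg₀le x hx; linarith
    have step1 : 2 ^ (-p) * (g x + A) ^ (p+1) ≤ g x ^ (p+1) + A ^ (p+1) := by
      have h := aux_convhalf hgx hA (by linarith : (1:ℝ) ≤ p+1)
      have e : p + 1 - 1 = p := by ring
      rw [e] at h
      have h2 := mul_le_mul_of_nonneg_left h (Real.rpow_nonneg (by norm_num : (0:ℝ) ≤ 2) (-p))
      calc 2 ^ (-p) * (g x + A)^(p+1) ≤ 2^(-p) * (2^p * (g x^(p+1) + A^(p+1))) := h2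
        _ = g x^(p+1) + A^(p+1) := by
            rw [← mul_assoc, ← Real.rpow_add (by norm_num : (0:ℝ) < 2)]
            norm_num
    have step3 : (Cp/Cq) * (2 ^ (-p) * (g x + A) ^ (p+1)) ≤ f x ^ (q+1) := by
      have h := consA x hx
      have h2 : Cp * (2^(-p) * (g x + A)^(p+1)) ≤ Cq * f x ^ (q+1) := by
        rw [h]; exact mul_le_mul_of_nonneg_left step1 hCp.le
      rw [div_mul_eq_mul_div, div_le_iff₀ hCq]
      linarith
    have hbase : (0:ℝ) ≤ (Cp/Cq) * (2 ^ (-p) * (g x + A) ^ (p+1)) := by positivity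
    have step4 := Real.rpow_le_rpow hbase step3 (by positivity : (0:ℝ) ≤ q/(q+1))
    have efx : (f x ^ (q+1)) ^ (q/(q+1)) = f x ^ q := by
      rw [← Real.rpow_mul hfx]
      congr 1
      field_simp
    rw [efx] at step4
    calc c2 * (g x + A) ^ ((p+1)*(q/(q+1)))
        = ((Cp/Cq) * (2 ^ (-p) * (g x + A) ^ (p+1))) ^ (q/(q+1)) := by
          rw [Real.mul_rpow (by positivity) (by positivity),
              Real.mul_rpow (by positivity) (by positivity),
              ← Real.rpow_mul (by norm_num : (0:ℝ) ≤ 2),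
              ← Real.rpow_mul hgA.le]
          have e2 : (-p) * (q/(q+1)) = -(p*q)/(q+1) := by ring
          rw [e2, hc2def]
          ring
      _ ≤ f x ^ q := step4
  -- name the constants appearing in the goal
  set K : ℝ := 2 ^ (-(p * q) / (q + 1)) * (p * q - 1) * Cp ^ (q / (q + 1)) *
      Cq ^ ((1 : ℝ) / (q + 1)) with hKdef
  set B₀ : ℝ := Cp ^ ((p * q - 1) / ((p + 1) * (q + 1))) *
      Cq ^ (-((p * q - 1) / ((p + 1) * (q + 1)))) * f₀ ^ (-((p * q - 1) / (p + 1))) with hB₀def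
  have h3q : Cq ^ ((1:ℝ)/(q+1)) * Cq ^ (q/(q+1)) = Cq := by
    rw [← Real.rpow_add hCq]
    have e : (1:ℝ)/(q+1) + q/(q+1) = 1 := by field_simp; ring
    rw [e, Real.rpow_one]
  have h2c : Cq * (Cp/Cq) ^ (q/(q+1)) = Cp ^ (q/(q+1)) * Cq ^ ((1:ℝ)/(q+1)) := by
    have hne : Cq ^ (q/(q+1)) ≠ 0 := ne_of_gt (Real.rpow_pos_of_pos hCq _)
    calc Cq * (Cp/Cq) ^ (q/(q+1))
        = Cq * (Cp ^ (q/(q+1)) / Cq ^ (q/(q+1))) := by rw [Real.div_rpow hCp.le hCq.le]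
      _ = (Cq ^ ((1:ℝ)/(q+1)) * Cq ^ (q/(q+1))) * (Cp ^ (q/(q+1)) / Cq ^ (q/(q+1))) := by
          rw [h3q]
      _ = Cp ^ (q/(q+1)) * Cq ^ ((1:ℝ)/(q+1)) := by field_simp
  have hKc : (q+1) * β * Cq * c2 = K := by
    have h1 : (q+1) * β = p*q - 1 := by rw [hβdef]; field_simp
    calc (q+1)*β*Cq*c2
        = ((q+1)*β) * (Cq * (Cp/Cq)^(q/(q+1))) * 2^(-(p*q)/(q+1)) := by rw [hc2def]; ring
      _ = K := by rw [h1, h2c, hKdef]; ring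
  -- the Lyapunov-type function ψ is antitone
  have hψ' : ∀ x ∈ D, HasDerivAt (fun s => (g s + A) ^ (-β) + K * s)
      ((q+1) * Cq * f x ^ q * (-β) * (g x + A) ^ (-β - 1) + K) x := by
    intro x hx
    have hgA : (0:ℝ) < g x + A := by have := hg₀le x hx; linarith
    have h1 := ((hg' x hx).add_const A).rpow_const (p := -β) (Or.inl (ne_of_gt hgA))
    have h2 : HasDerivAt (fun s : ℝ => K * s) K x := by
      simpa using (hasDerivAt_id x).const_mul K
    exact h1.add h2
  have hψd : ∀ x ∈ D, (q+1) * Cq * f x ^ q * (-β) * (g x + A) ^ (-β - 1) + K ≤ 0 := by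
    intro x hx
    have hgA : (0:ℝ) < g x + A := by have := hg₀le x hx; linarith
    have hk := hkey x hx
    have hpow : (0:ℝ) < (g x + A) ^ (-β - 1) := Real.rpow_pos_of_pos hgA _
    have hmul := mul_le_mul_of_nonneg_left hk
      (mul_nonneg (by positivity : (0:ℝ) ≤ (q+1)*β*Cq) hpow.le)
    have hexp : (g x + A) ^ (-β-1) * (g x + A) ^ ((p+1)*(q/(q+1))) = 1 := by
      rw [← Real.rpow_add hgA]
      have e : -β - 1 + (p+1)*(q/(q+1)) = 0 := by rw [hβdef]; field_simp; ring
      rw [e, Real.rpow_zero]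
    have hL : (q+1)*β*Cq*(g x + A)^(-β-1) * (c2 * (g x + A) ^ ((p+1)*(q/(q+1)))) = K := by
      calc (q+1)*β*Cq*(g x + A)^(-β-1) * (c2 * (g x + A) ^ ((p+1)*(q/(q+1))))
          = ((q+1)*β*Cq*c2) * ((g x + A)^(-β-1) * (g x+A)^((p+1)*(q/(q+1)))) := by ring
        _ = K := by rw [hexp, hKc, mul_one]
    rw [hL] at hmul
    nlinarith [hmul]
  have hψanti : AntitoneOn (fun s => (g s + A) ^ (-β) + K * s) D := by
    apply antitoneOn_of_deriv_nonpos hconv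
      (fun y hy => (hψ' y hy).continuousAt.continuousWithinAt)
    · rw [hintD]; exact fun y hy => ((hψ' y (hsub hy)).differentiableAt).differentiableWithinAt
    · rw [hintD]; intro y hy
      rw [(hψ' y (hsub hy)).deriv]
      exact hψd y (hsub hy)
  -- initial value bound
  have hsum : Cq/Cp * f₀ ^ (q+1) = g₀ ^ (p+1) + A ^ (p+1) := by
    rw [hApow]; field_simp; ring
  have hMpos : (0:ℝ) < Cq/Cp * f₀ ^ (q+1) := by positivity
  have hinit2 : Cq/Cp * f₀ ^ (q+1) ≤ (g₀ + A) ^ (p+1) := by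
    rw [hsum]; exact aux_superadd hg₀.le hA (by linarith)
  have hφ0 : (g₀ + A) ^ (-β) ≤ B₀ := by
    have e1 : (g₀ + A) ^ (-β) = ((g₀ + A) ^ (p+1)) ^ (-(β/(p+1))) := by
      rw [← Real.rpow_mul (by positivity)]
      congr 1
      field_simp
    rw [e1]
    have h2 := Real.rpow_le_rpow_of_nonpos hMpos hinit2
      (neg_nonpos.mpr (by positivity : (0:ℝ) ≤ β/(p+1)))
    refine le_trans h2 (le_of_eq ?_)
    rw [Real.mul_rpow (by positivity) (by positivity), ← Real.rpow_mul hf₀.le]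
    have eγ : -(β/(p+1)) = -((p*q-1)/((p+1)*(q+1))) := by rw [hβdef, div_div]; ring_nf
    have ef : (q+1) * (-(β/(p+1))) = -((p*q-1)/(p+1)) := by
      rw [hβdef]; field_simp
    have hd : (Cq/Cp) ^ (-((p*q-1)/((p+1)*(q+1)))) =
        Cp ^ ((p*q-1)/((p+1)*(q+1))) * Cq ^ (-((p*q-1)/((p+1)*(q+1)))) := by
      rw [Real.rpow_neg (by positivity), Real.div_rpow hCq.le hCp.le, Real.rpow_neg hCq.le]
      rw [inv_div]
      field_simp
    rw [ef, eγ, hd, hB₀def]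
  -- conclusion
  intro t ht
  have h1 := hψanti h0D ht ht.1
  simp only [hg0, mul_zero, add_zero] at h1
  have h2 : (g t + A) ^ (-β) ≤ B₀ - K * t := by linarith
  have hgA : (0:ℝ) < g t + A := by have := hg₀le t ht; linarith
  have hφpos : (0:ℝ) < (g t + A) ^ (-β) := Real.rpow_pos_of_pos hgA _
  have h3 := Real.rpow_le_rpow_of_nonpos hφpos h2
    (neg_nonpos.mpr (inv_nonneg.mpr hβ.le))
  have h4 : ((g t + A) ^ (-β)) ^ (-β⁻¹) = g t + A := by
    rw [← Real.rpow_mul hgA.le]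
    have e : (-β) * (-β⁻¹) = 1 := by field_simp
    rw [e, Real.rpow_one]
  rw [h4] at h3
  have e5 : -((q+1)/(p*q-1)) = -β⁻¹ := by rw [hβdef, inv_div]
  rw [e5]
  linarith
end

section
/- Let ρ > 1, ω > 0, c > 0, and let h be a positive C¹ function on [0, T) satisfying h'(t) ≥ c e^{-ωt} h(t)^ρ for all t ∈ [0, T). Then for all t ∈ [0, T): h(t) ≥ ( h(0)^{-(ρ-1)} - c(ρ-1)ω⁻¹(1 - e^{-ωt}) )^{-1/(ρ-1)}, provided the base of this power is positive on [0, T). -/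
open Real Set

theorem stmt_10 (ρ ω c T : ℝ) (hρ : 1 < ρ) (hω : 0 < ω) (hc : 0 < c)
    (h h' : ℝ → ℝ)
    (hpos : ∀ t ∈ Set.Ico (0 : ℝ) T, 0 < h t)
    (hder : ∀ t ∈ Set.Ico (0 : ℝ) T, HasDerivAt h (h' t) t)
    (hcont : ContinuousOn h' (Set.Ico 0 T))
    (hODI : ∀ t ∈ Set.Ico (0 : ℝ) T, c * Real.exp (-(ω * t)) * h t ^ ρ ≤ h' t)
    (hbase : ∀ t ∈ Set.Ico (0 : ℝ) T,
      0 < h 0 ^ (-(ρ - 1)) - c * (ρ - 1) * ω⁻¹ * (1 - Real.exp (-(ω * t)))) :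
    ∀ t ∈ Set.Ico (0 : ℝ) T,
      (h 0 ^ (-(ρ - 1)) - c * (ρ - 1) * ω⁻¹ * (1 - Real.exp (-(ω * t)))) ^ (-(ρ - 1)⁻¹)
        ≤ h t := by
  intro t ht
  obtain ⟨ht0, htT⟩ := ht
  have hρ1 : 0 < ρ - 1 := by linarith
  set φ : ℝ → ℝ := fun s =>
    h s ^ (-(ρ - 1)) + c * (ρ - 1) * ω⁻¹ * (1 - Real.exp (-(ω * s))) with hφ
  -- each point of [0,t] is in [0,T)
  have hsub : Set.Icc (0 : ℝ) t ⊆ Set.Ico 0 T := fun s hs =>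
    ⟨hs.1, lt_of_le_of_lt hs.2 htT⟩
  -- derivative of φ at points of Ico 0 T
  have hderφ : ∀ s ∈ Set.Ico (0 : ℝ) T,
      HasDerivAt φ (h' s * (-(ρ - 1)) * h s ^ (-(ρ - 1) - 1)
        + c * (ρ - 1) * ω⁻¹ * -(Real.exp (-(ω * s)) * -(ω * 1))) s := by
    intro s hs
    have hA : HasDerivAt (fun s => h s ^ (-(ρ - 1))) (h' s * (-(ρ - 1)) * h s ^ (-(ρ - 1) - 1)) s :=
      (hder s hs).rpow_const (Or.inl (hpos s hs).ne')
    have hB : HasDerivAt (fun s => Real.exp (-(ω * s))) (Real.exp (-(ω * s)) * -(ω * 1)) s :=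
      (((hasDerivAt_id s).const_mul ω).neg).exp
    exact hA.add (((hB.const_sub 1)).const_mul (c * (ρ - 1) * ω⁻¹))
  -- φ is antitone on [0,t]
  have hanti : AntitoneOn φ (Set.Icc 0 t) := by
    apply antitoneOn_of_deriv_nonpos (convex_Icc 0 t)
    · exact fun s hs => ((hderφ s (hsub hs)).continuousAt).continuousWithinAt
    · intro s hs
      have hs' : s ∈ Set.Icc (0 : ℝ) t := interior_subset hs
      exact ((hderφ s (hsub hs')).differentiableAt).differentiableWithinAt
    · intro s hs
      have hs' : s ∈ Set.Ico (0 : ℝ) T := hsub (interior_subset hs)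
      rw [(hderφ s hs').deriv]
      have hhs := hpos s hs'
      have he : (0:ℝ) < Real.exp (-(ω * s)) := Real.exp_pos _
      have hpow : h s ^ (-(ρ - 1) - 1) * h s ^ ρ = 1 := by
        rw [← Real.rpow_add hhs]
        have : -(ρ - 1) - 1 + ρ = 0 := by ring
        rw [this, Real.rpow_zero]
      have hmul : h' s * (-(ρ - 1)) * h s ^ (-(ρ - 1) - 1)
          ≤ (c * Real.exp (-(ω * s)) * h s ^ ρ) * (-(ρ - 1)) * h s ^ (-(ρ - 1) - 1) := by
        have hposp : 0 < h s ^ (-(ρ - 1) - 1) := Real.rpow_pos_of_pos hhs _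
        exact mul_le_mul_of_nonneg_right
          (mul_le_mul_of_nonpos_right (hODI s hs') (by linarith)) hposp.le
      have heq : (c * Real.exp (-(ω * s)) * h s ^ ρ) * (-(ρ - 1)) * h s ^ (-(ρ - 1) - 1)
          = -(c * (ρ - 1) * Real.exp (-(ω * s))) := by
        have : (c * Real.exp (-(ω * s)) * h s ^ ρ) * (-(ρ - 1)) * h s ^ (-(ρ - 1) - 1)
            = -(c * (ρ - 1) * Real.exp (-(ω * s))) * (h s ^ (-(ρ - 1) - 1) * h s ^ ρ) := by ring
        rw [this, hpow, mul_one]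
      have hωinv : c * (ρ - 1) * ω⁻¹ * -(Real.exp (-(ω * s)) * -(ω * 1))
          = c * (ρ - 1) * Real.exp (-(ω * s)) := by
        field_simp
      rw [hωinv]
      linarith [heq ▸ hmul]
  -- φ t ≤ φ 0
  have hkey : φ t ≤ φ 0 := hanti (Set.left_mem_Icc.mpr ht0) (Set.right_mem_Icc.mpr ht0) ht0
  have hφ0 : φ 0 = h 0 ^ (-(ρ - 1)) := by
    simp [hφ]
  have hbt := hbase t ⟨ht0, htT⟩
  have hle : h t ^ (-(ρ - 1)) ≤ h 0 ^ (-(ρ - 1)) - c * (ρ - 1) * ω⁻¹ * (1 - Real.exp (-(ω * t))) := by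
    have := hkey
    rw [hφ0] at this
    simp only [hφ] at this
    linarith
  have hht : 0 < h t := hpos t ⟨ht0, htT⟩
  have hpowt : 0 < h t ^ (-(ρ - 1)) := Real.rpow_pos_of_pos hht _
  have hfinal := Real.rpow_le_rpow_of_nonpos hpowt hle
    (neg_nonpos.mpr (by positivity : (0:ℝ) ≤ (ρ - 1)⁻¹))
  -- hfinal : base ^ (-(ρ-1)⁻¹) ≤ (h t ^ (-(ρ-1))) ^ (-(ρ-1)⁻¹)
  have hsimp : (h t ^ (-(ρ - 1))) ^ (-(ρ - 1)⁻¹) = h t := by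
    rw [← Real.rpow_mul hht.le,
      show -(ρ - 1) * -(ρ - 1)⁻¹ = 1 by field_simp, Real.rpow_one]
  rw [hsimp] at hfinal
  exact hfinal
end

section
/- Let p, q ≥ 1 with p ≥ q and pq > 1, and let β₁, β₂ ∈ ℂ \ {0}. Suppose U, V : [0, T) → ℝ are C¹ functions satisfying U(0), V(0) > 0 and the ODIs U'(t) ≥ |β₁|² |β₂|^{-p} (2π)^{-n(p-1)} V(t)^p and V'(t) ≥ |β₂|² |β₁|^{-q} (2π)^{-n(q-1)} U(t)^q whenever U(t), V(t) ≥ 0, with ((|β₂|^{2+p}/(q+1)) (2π)^{-n(p-1)}) U(0)^{q+1} ≥ ((|β₁|^{2+q}/(p+1)) (2π)^{-n(q-1)}) V(0)^{p+1} > 0. Then T is finite and T ≤ (2^{pq/(q+1)}/(pq-1)) C_p^{-1/(p+1)} C_q^{-p/(p+1)} U(0)^{-(pq-1)/(p+1)}, where C_p = |β₁|²|β₂|^{-p}(2π)^{-n(p-1)}/(p+1) and C_q = |β₂|²|β₁|^{-q}(2π)^{-n(q-1)}/(q+1). -/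
open Real Set Complex


private lemma mono_aux {f f' : ℝ → ℝ} {c d : ℝ} (hcd : c ≤ d)
    (hd : ∀ s ∈ Set.Icc c d, HasDerivAt f (f' s) s)
    (h0 : ∀ s ∈ Set.Ioo c d, 0 ≤ f' s) : f c ≤ f d := by
  have hmono : MonotoneOn f (Set.Icc c d) := by
    apply monotoneOn_of_deriv_nonneg (convex_Icc c d)
    · exact fun s hs => (hd s hs).continuousAt.continuousWithinAt
    · intro s hs
      rw [interior_Icc] at hs
      exact ((hd s (Ioo_subset_Icc_self hs)).differentiableAt).differentiableWithinAt
    · intro s hs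
      rw [interior_Icc] at hs
      rw [(hd s (Ioo_subset_Icc_self hs)).deriv]
      exact h0 s hs
  exact hmono ⟨le_refl c, hcd⟩ ⟨hcd, le_refl d⟩ hcd

private lemma stay {F G : ℝ → ℝ} {c d : ℝ} (hcd : c ≤ d)
    (hF : ContinuousOn F (Set.Icc c d)) (hG : ContinuousOn G (Set.Icc c d))
    (hFc : 0 < F c) (hGc : 0 < G c)
    (key : ∀ s ∈ Set.Ioc c d, (∀ r ∈ Set.Ico c s, 0 ≤ F r ∧ 0 ≤ G r) →
      F c ≤ F s ∧ G c ≤ G s) :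
    ∀ s ∈ Set.Icc c d, 0 ≤ F s ∧ 0 ≤ G s := by
  set S : Set ℝ := {s | s ∈ Set.Icc c d ∧ ∀ r ∈ Set.Icc c s, 0 ≤ F r ∧ 0 ≤ G r} with hS
  have hcS : c ∈ S := by
    refine ⟨⟨le_refl c, hcd⟩, fun r hr => ?_⟩
    have : r = c := le_antisymm hr.2 hr.1
    exact this ▸ ⟨hFc.le, hGc.le⟩
  have hne : S.Nonempty := ⟨c, hcS⟩
  have hbdd : BddAbove S := ⟨d, fun x hx => hx.1.2⟩
  set s₁ := sSup S with hs₁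
  have hcs₁ : c ≤ s₁ := le_csSup hbdd hcS
  have hs₁d : s₁ ≤ d := csSup_le hne (fun x hx => hx.1.2)
  -- prefix property
  have hpre : ∀ r ∈ Set.Ico c s₁, 0 ≤ F r ∧ 0 ≤ G r := by
    intro r hr
    obtain ⟨s, hsS, hrs⟩ := exists_lt_of_lt_csSup hne hr.2
    exact hsS.2 r ⟨hr.1, hrs.le⟩
  -- values at s₁
  have hkey₁ : 0 < F s₁ ∧ 0 < G s₁ := by
    rcases eq_or_lt_of_le hcs₁ with h | h
    · exact h ▸ ⟨hFc, hGc⟩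
    · obtain ⟨h1, h2⟩ := key s₁ ⟨h, hs₁d⟩ hpre
      exact ⟨lt_of_lt_of_le hFc h1, lt_of_lt_of_le hGc h2⟩
  have hs₁S : s₁ ∈ S := by
    refine ⟨⟨hcs₁, hs₁d⟩, fun r hr => ?_⟩
    rcases lt_or_eq_of_le hr.2 with h | h
    · exact hpre r ⟨hr.1, h⟩
    · exact h ▸ ⟨hkey₁.1.le, hkey₁.2.le⟩
  -- show s₁ = d
  have hs₁eq : s₁ = d := by
    by_contra hne'
    have hlt : s₁ < d := lt_of_le_of_ne hs₁d hne'
    have hmem : s₁ ∈ Set.Icc c d := ⟨hcs₁, hs₁d⟩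
    have hFcw : ContinuousWithinAt F (Set.Icc c d) s₁ := hF s₁ hmem
    have hGcw : ContinuousWithinAt G (Set.Icc c d) s₁ := hG s₁ hmem
    have hFm : F ⁻¹' Set.Ioi 0 ∈ nhdsWithin s₁ (Set.Icc c d) :=
      hFcw (Ioi_mem_nhds hkey₁.1)
    have hGm : G ⁻¹' Set.Ioi 0 ∈ nhdsWithin s₁ (Set.Icc c d) :=
      hGcw (Ioi_mem_nhds hkey₁.2)
    obtain ⟨ε₁, hε₁, hball₁⟩ := Metric.mem_nhdsWithin_iff.1 hFm
    obtain ⟨ε₂, hε₂, hball₂⟩ := Metric.mem_nhdsWithin_iff.1 hGm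
    set ε := min ε₁ ε₂ with hε
    have hεpos : 0 < ε := lt_min hε₁ hε₂
    set s₂ := min d (s₁ + ε / 2) with hs₂
    have hs₁s₂ : s₁ < s₂ := lt_min hlt (by linarith)
    have hs₂S : s₂ ∈ S := by
      refine ⟨⟨hcs₁.trans hs₁s₂.le, min_le_left _ _⟩, fun r hr => ?_⟩
      rcases le_or_gt r s₁ with h | h
      · exact hs₁S.2 r ⟨hr.1, h⟩
      · have hrd : r ∈ Set.Icc c d := ⟨hr.1, hr.2.trans (min_le_left _ _)⟩
        have hdist : dist r s₁ < ε := by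
          rw [Real.dist_eq, abs_of_pos (by linarith)]
          have : r ≤ s₁ + ε / 2 := hr.2.trans (min_le_right _ _)
          linarith
        have h1 : r ∈ Metric.ball s₁ ε₁ ∩ Set.Icc c d :=
          ⟨Metric.mem_ball.2 (lt_of_lt_of_le hdist (min_le_left _ _)), hrd⟩
        have h2 : r ∈ Metric.ball s₁ ε₂ ∩ Set.Icc c d :=
          ⟨Metric.mem_ball.2 (lt_of_lt_of_le hdist (min_le_right _ _)), hrd⟩
        exact ⟨(hball₁ h1).le, (hball₂ h2).le⟩
    have : s₂ ≤ s₁ := le_csSup hbdd hs₂S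
    linarith
  intro s hs
  exact hs₁S.2 s ⟨hs.1, hs₁eq ▸ hs.2⟩

private lemma arith_aux {p q : ℝ} (hp : 1 ≤ p) (hq : 1 ≤ q) (hpq : 1 < p * q) :
    (p * q + q) / (q + 1) ≤ (2 : ℝ) ^ (p * q / (q + 1)) := by
  have hq1 : (0 : ℝ) < q + 1 := by linarith
  set x := p * q / (q + 1) with hxdef
  have hx : 0 < x := div_pos (by linarith) hq1
  have hqx : q / (q + 1) ≤ x := by
    rw [hxdef, div_le_div_iff₀ hq1 hq1]
    nlinarith [mul_pos (show (0:ℝ) < q by linarith) hq1]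
  have hsplit : (p * q + q) / (q + 1) = x + q / (q + 1) := by
    rw [hxdef]; ring
  rw [hsplit]
  have h2x : (2 : ℝ) ^ x = 2 * Real.exp ((x - 1) * Real.log 2) := by
    have : (2 : ℝ) ^ x = (2 : ℝ) ^ (1 + (x - 1)) := by ring_nf
    rw [this, Real.rpow_add (by norm_num), Real.rpow_one,
      Real.rpow_def_of_pos (by norm_num)]
    ring_nf
  have he : (x - 1) * Real.log 2 + 1 ≤ Real.exp ((x - 1) * Real.log 2) :=
    Real.add_one_le_exp _
  have hl2a := Real.log_two_gt_d9
  have hl2b := Real.log_two_lt_d9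
  rcases le_or_gt x 1 with hx1 | hx1
  · have : x + q / (q + 1) ≤ 2 * x := by linarith [hqx]
    refine this.trans ?_
    rw [h2x]
    nlinarith [he, hl2b, hx.le]
  · have hq2 : q / (q + 1) ≤ 1 := by
      rw [div_le_one hq1]; linarith
    have : x + q / (q + 1) ≤ x + 1 := by linarith
    refine this.trans ?_
    rw [h2x]
    nlinarith [he, hl2a]

private lemma log_eq_imp {x y : ℝ} (hx : 0 < x) (hy : 0 < y)
    (h : Real.log x = Real.log y) : x = y := by
  rw [← Real.exp_log hx, ← Real.exp_log hy, h]

private lemma lifespan_aux (p q a b T : ℝ) (hp : 1 ≤ p) (hq : 1 ≤ q) (hpq : 1 < p * q)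
    (ha : 0 < a) (hb : 0 < b) (hT : 0 < T) (U V U' V' : ℝ → ℝ)
    (hder : ∀ t ∈ Set.Ico (0:ℝ) T, HasDerivAt U (U' t) t ∧ HasDerivAt V (V' t) t)
    (hU0 : 0 < U 0) (hV0 : 0 < V 0)
    (hODIU : ∀ t ∈ Set.Ico (0:ℝ) T, 0 ≤ U t → 0 ≤ V t → a * V t ^ p ≤ U' t)
    (hODIV : ∀ t ∈ Set.Ico (0:ℝ) T, 0 ≤ U t → 0 ≤ V t → b * U t ^ q ≤ V' t) :
    T ≤ 2 ^ (p * q / (q + 1)) / (p * q - 1) * (a / (p + 1)) ^ (-((1:ℝ) / (p + 1))) *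
      (b / (q + 1)) ^ (-(p / (p + 1))) * U 0 ^ (-((p * q - 1) / (p + 1))) := by
  have hpq1 : (0:ℝ) < p * q - 1 := by linarith
  have hp1 : (0:ℝ) < p + 1 := by linarith
  have hq1 : (0:ℝ) < q + 1 := by linarith
  have hp0 : (0:ℝ) < p := by linarith
  have hq0 : (0:ℝ) < q := by linarith
  set al := (p + 1) / (p * q - 1) with haldef
  set be := (q + 1) / (p * q - 1) with hbedef
  have hal0 : 0 < al := div_pos hp1 hpq1
  have hbe0 : 0 < be := div_pos hq1 hpq1
  have hal : al * (p * q - 1) = p + 1 := div_mul_cancel₀ _ hpq1.ne'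
  have hbe : be * (p * q - 1) = q + 1 := div_mul_cancel₀ _ hpq1.ne'
  have h1 : q * al = be + 1 := by
    rw [haldef, hbedef, div_add_one hpq1.ne', mul_div_assoc']; ring
  have hbep : be * p = al + 1 := by
    rw [haldef, hbedef, div_add_one hpq1.ne']; ring
  set I := (Real.log al + p * Real.log be - Real.log a - p * Real.log b
      - (p * q - 1) * Real.log (U 0)) / (p + 1) with hIdef
  have hIeq : (p + 1) * I = Real.log al + p * Real.log be - Real.log a - p * Real.log b
      - (p * q - 1) * Real.log (U 0) := by
    rw [hIdef]; field_simp
  set τ := Real.exp I with hτdef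
  have hτ : 0 < τ := Real.exp_pos _
  set A := U 0 * τ ^ al with hAdef
  have hA : 0 < A := mul_pos hU0 (Real.rpow_pos_of_pos hτ _)
  set B := b * A ^ q / be with hBdef
  have hB : 0 < B := div_pos (mul_pos hb (Real.rpow_pos_of_pos hA _)) hbe0
  set τ₁ := τ / be with hτ₁def
  have hτ₁ : 0 < τ₁ := div_pos hτ hbe0
  have lgτ : Real.log τ = I := Real.log_exp _
  have lgA : Real.log A = Real.log (U 0) + al * I := by
    rw [hAdef, Real.log_mul hU0.ne' (Real.rpow_pos_of_pos hτ _).ne',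
      Real.log_rpow hτ, lgτ]
  have lgB : Real.log B = Real.log b + q * Real.log A - Real.log be := by
    rw [hBdef, Real.log_div (mul_pos hb (Real.rpow_pos_of_pos hA _)).ne' hbe0.ne',
      Real.log_mul hb.ne' (Real.rpow_pos_of_pos hA _).ne', Real.log_rpow hA]
  -- key identity 1 : al * A = a * B ^ p
  have KI1 : al * A = a * B ^ p := by
    apply log_eq_imp (mul_pos hal0 hA) (mul_pos ha (Real.rpow_pos_of_pos hB _))
    rw [Real.log_mul hal0.ne' hA.ne', Real.log_mul ha.ne'
      (Real.rpow_pos_of_pos hB _).ne', Real.log_rpow hB, lgB, lgA]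
    linear_combination -hIeq - I * hal
  -- key identity 2 : b * A ^ q = be * B
  have KI2 : b * A ^ q = be * B := by
    rw [hBdef]; field_simp
  -- key identity 3 : b * U 0 ^ q * τ₁ = B * τ ^ (-be)
  have KI3 : b * U 0 ^ q * τ₁ = B * τ ^ (-be) := by
    apply log_eq_imp (mul_pos (mul_pos hb (Real.rpow_pos_of_pos hU0 _)) hτ₁)
      (mul_pos hB (Real.rpow_pos_of_pos hτ _))
    rw [Real.log_mul (mul_pos hb (Real.rpow_pos_of_pos hU0 _)).ne' hτ₁.ne',
      Real.log_mul hb.ne' (Real.rpow_pos_of_pos hU0 _).ne',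
      Real.log_mul hB.ne' (Real.rpow_pos_of_pos hτ _).ne',
      Real.log_rpow hU0, Real.log_rpow hτ, lgτ, hτ₁def,
      Real.log_div hτ.ne' hbe0.ne', lgτ, lgB, lgA]
    linear_combination (-I) * h1
  -- coefficient identity : RHS = 2^x * τ
  have lgal : Real.log al = Real.log (p + 1) - Real.log (p * q - 1) := by
    rw [haldef, Real.log_div hp1.ne' hpq1.ne']
  have lgbe : Real.log be = Real.log (q + 1) - Real.log (p * q - 1) := by
    rw [hbedef, Real.log_div hq1.ne' hpq1.ne']
  have KF : 2 ^ (p * q / (q + 1)) / (p * q - 1) * (a / (p + 1)) ^ (-((1:ℝ) / (p + 1))) *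
      (b / (q + 1)) ^ (-(p / (p + 1))) * U 0 ^ (-((p * q - 1) / (p + 1)))
      = 2 ^ (p * q / (q + 1)) * τ := by
    have h2 : (0:ℝ) < (2:ℝ) ^ (p * q / (q + 1)) := Real.rpow_pos_of_pos (by norm_num) _
    apply log_eq_imp
    · positivity
    · positivity
    rw [Real.log_mul (by positivity) (Real.rpow_pos_of_pos hU0 _).ne',
      Real.log_mul (by positivity) (Real.rpow_pos_of_pos (by positivity : (0:ℝ) < b / (q+1)) _).ne',
      Real.log_mul (div_pos h2 hpq1).ne' (Real.rpow_pos_of_pos (by positivity : (0:ℝ) < a / (p+1)) _).ne',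
      Real.log_div h2.ne' hpq1.ne',
      Real.log_mul h2.ne' hτ.ne',
      Real.log_rpow hU0, Real.log_rpow (by positivity : (0:ℝ) < a / (p+1)),
      Real.log_rpow (by positivity : (0:ℝ) < b / (q+1)), lgτ,
      Real.log_div ha.ne' hp1.ne', Real.log_div hb.ne' hq1.ne']
    rw [hIdef, lgal, lgbe]
    field_simp
    ring
  -- positivity of trajectories
  have POS : ∀ t ∈ Set.Ico (0:ℝ) T, ∀ s ∈ Set.Icc (0:ℝ) t, 0 ≤ U s ∧ 0 ≤ V s := by
    intro t ht
    have hsub : Set.Icc (0:ℝ) t ⊆ Set.Ico 0 T :=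
      fun s hs => ⟨hs.1, lt_of_le_of_lt hs.2 ht.2⟩
    refine stay ht.1 ?_ ?_ hU0 hV0 ?_
    · exact fun s hs => ((hder s (hsub hs)).1.continuousAt).continuousWithinAt
    · exact fun s hs => ((hder s (hsub hs)).2.continuousAt).continuousWithinAt
    · intro s hs hpre
      have hsub2 : Set.Icc (0:ℝ) s ⊆ Set.Ico 0 T :=
        fun r hr => hsub ⟨hr.1, hr.2.trans hs.2⟩
      constructor
      · refine mono_aux hs.1.le (fun r hr => (hder r (hsub2 hr)).1) ?_
        intro r hr
        have hpr := hpre r ⟨hr.1.le, hr.2⟩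
        have := hODIU r (hsub2 ⟨hr.1.le, hr.2.le⟩) hpr.1 hpr.2
        have h0 : 0 ≤ a * V r ^ p := mul_nonneg ha.le (Real.rpow_nonneg hpr.2 _)
        linarith
      · refine mono_aux hs.1.le (fun r hr => (hder r (hsub2 hr)).2) ?_
        intro r hr
        have hpr := hpre r ⟨hr.1.le, hr.2⟩
        have := hODIV r (hsub2 ⟨hr.1.le, hr.2.le⟩) hpr.1 hpr.2
        have h0 : 0 ≤ b * U r ^ q := mul_nonneg hb.le (Real.rpow_nonneg hpr.1 _)
        linarith
  -- monotone lower bounds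
  have R2U : ∀ t ∈ Set.Ico (0:ℝ) T, U 0 ≤ U t := by
    intro t ht
    refine mono_aux ht.1 (fun r hr => (hder r ⟨hr.1, lt_of_le_of_lt hr.2 ht.2⟩).1) ?_
    intro r hr
    have hrT : r ∈ Set.Ico (0:ℝ) T := ⟨hr.1.le, hr.2.trans ht.2⟩
    have hpr := POS t ht r ⟨hr.1.le, hr.2.le⟩
    have := hODIU r hrT hpr.1 hpr.2
    have h0 : 0 ≤ a * V r ^ p := mul_nonneg ha.le (Real.rpow_nonneg hpr.2 _)
    linarith
  have R2V : ∀ t ∈ Set.Ico (0:ℝ) T, V 0 ≤ V t := by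
    intro t ht
    refine mono_aux ht.1 (fun r hr => (hder r ⟨hr.1, lt_of_le_of_lt hr.2 ht.2⟩).2) ?_
    intro r hr
    have hrT : r ∈ Set.Ico (0:ℝ) T := ⟨hr.1.le, hr.2.trans ht.2⟩
    have hpr := POS t ht r ⟨hr.1.le, hr.2.le⟩
    have := hODIV r hrT hpr.1 hpr.2
    have h0 : 0 ≤ b * U r ^ q := mul_nonneg hb.le (Real.rpow_nonneg hpr.1 _)
    linarith
  have R3 : ∀ t ∈ Set.Ico (0:ℝ) T, V 0 + b * U 0 ^ q * t ≤ V t := by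
    intro t ht
    have key := mono_aux (f := fun s => V s - b * U 0 ^ q * s)
      (f' := fun s => V' s - b * U 0 ^ q) ht.1 ?_ ?_
    · simp only [mul_zero, sub_zero] at key; linarith [key]
    · intro s hs
      exact ((hder s ⟨hs.1, lt_of_le_of_lt hs.2 ht.2⟩).2).sub
        (by simpa using (hasDerivAt_id s).const_mul (b * U 0 ^ q))
    · intro r hr
      have hrT : r ∈ Set.Ico (0:ℝ) T := ⟨hr.1.le, hr.2.trans ht.2⟩
      have hpr := POS t ht r ⟨hr.1.le, hr.2.le⟩
      have h2 := hODIV r hrT hpr.1 hpr.2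
      have h3 : U 0 ^ q ≤ U r ^ q := Real.rpow_le_rpow hU0.le (R2U r hrT) hq0.le
      have h4 : b * U 0 ^ q ≤ b * U r ^ q := by
        exact mul_le_mul_of_nonneg_left h3 hb.le
      linarith
  have R4 : ∀ t ∈ Set.Ico (0:ℝ) T, U 0 + a * V 0 ^ p * t ≤ U t := by
    intro t ht
    have key := mono_aux (f := fun s => U s - a * V 0 ^ p * s)
      (f' := fun s => U' s - a * V 0 ^ p) ht.1 ?_ ?_
    · simp only [mul_zero, sub_zero] at key; linarith [key]
    · intro s hs
      exact ((hder s ⟨hs.1, lt_of_le_of_lt hs.2 ht.2⟩).1).sub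
        (by simpa using (hasDerivAt_id s).const_mul (a * V 0 ^ p))
    · intro r hr
      have hrT : r ∈ Set.Ico (0:ℝ) T := ⟨hr.1.le, hr.2.trans ht.2⟩
      have hpr := POS t ht r ⟨hr.1.le, hr.2.le⟩
      have h2 := hODIU r hrT hpr.1 hpr.2
      have h3 : V 0 ^ p ≤ V r ^ p := Real.rpow_le_rpow hV0.le (R2V r hrT) hp0.le
      have h4 : a * V 0 ^ p ≤ a * V r ^ p := mul_le_mul_of_nonneg_left h3 ha.le
      linarith
  -- final argument
  by_contra hcon
  push_neg at hcon
  have hfinal : τ₁ + τ ≤ 2 ^ (p * q / (q + 1)) * τ := by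
    have harith := arith_aux hp hq hpq
    have heq : τ₁ + τ = τ * ((p * q + q) / (q + 1)) := by
      rw [hτ₁def, hbedef]
      field_simp
      ring
    rw [heq, mul_comm ((2:ℝ) ^ (p * q / (q + 1))) τ]
    exact mul_le_mul_of_nonneg_left harith hτ.le
  have hσT : τ₁ + τ < T := by
    calc τ₁ + τ ≤ _ := hfinal
    _ = _ := KF.symm
    _ < T := hcon
  set σ := τ₁ + τ with hσdef
  have hτ₁T : τ₁ < T := by linarith
  have hσ0 : 0 < σ := by rw [hσdef]; linarith
  -- max of U on [0, σ]
  have hUcont : ContinuousOn U (Set.Icc 0 σ) := fun s hs =>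
    ((hder s ⟨hs.1, lt_of_le_of_lt hs.2 hσT⟩).1.continuousAt).continuousWithinAt
  obtain ⟨x₀, hx₀mem, hx₀max⟩ := isCompact_Icc.exists_isMaxOn
    (⟨0, le_refl 0, hσ0.le⟩ : (Set.Icc (0:ℝ) σ).Nonempty) hUcont
  set M := U x₀ with hMdef
  have hM : 0 < M := lt_of_lt_of_le hU0 (hx₀max ⟨le_refl 0, hσ0.le⟩)
  set δ0 := (A / (M + 1)) ^ ((1:ℝ) / al) with hδ0def
  have hδ0 : 0 < δ0 := Real.rpow_pos_of_pos (by positivity) _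
  set δ := min (τ / 2) δ0 with hδdef
  have hδpos : 0 < δ := lt_min (by linarith) hδ0
  have hδτ : δ ≤ τ / 2 := min_le_left _ _
  set m := σ - δ with hmdef
  have hτ₁m : τ₁ ≤ m := by rw [hmdef, hσdef]; linarith
  have hmσ : m < σ := by rw [hmdef]; linarith
  have hmT : m < T := lt_trans hmσ hσT
  have hm0 : 0 ≤ m := le_trans hτ₁.le hτ₁m
  have hsp : ∀ r ≤ m, 0 < σ - r := fun r hr => by rw [hmdef] at hr; linarith
  have hστ : σ - τ₁ = τ := by rw [hσdef]; ring
  -- comparison with the explicit sub-solution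
  have hustay : ∀ s ∈ Set.Icc τ₁ m,
      0 ≤ U s - A * (σ - s) ^ (-al) ∧ 0 ≤ V s - B * (σ - s) ^ (-be) := by
    refine stay hτ₁m ?_ ?_ ?_ ?_ ?_
    · intro s hs
      have hsT : s ∈ Set.Ico (0:ℝ) T := ⟨le_trans hτ₁.le hs.1, lt_of_le_of_lt hs.2 hmT⟩
      have h1 : ContinuousAt (fun t : ℝ => A * (σ - t) ^ (-al)) s := by
        have hb1 : ContinuousAt (fun t : ℝ => σ - t) s :=
          (continuous_const.sub continuous_id).continuousAt
        have hc1 : ContinuousAt (fun y : ℝ => y ^ (-al)) (σ - s) :=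
          Real.continuousAt_rpow_const _ _ (Or.inl (hsp s hs.2).ne')
        exact continuousAt_const.mul (hc1.comp hb1)
      exact (((hder s hsT).1.continuousAt).sub h1).continuousWithinAt
    · intro s hs
      have hsT : s ∈ Set.Ico (0:ℝ) T := ⟨le_trans hτ₁.le hs.1, lt_of_le_of_lt hs.2 hmT⟩
      have h1 : ContinuousAt (fun t : ℝ => B * (σ - t) ^ (-be)) s := by
        have hb1 : ContinuousAt (fun t : ℝ => σ - t) s :=
          (continuous_const.sub continuous_id).continuousAt
        have hc1 : ContinuousAt (fun y : ℝ => y ^ (-be)) (σ - s) :=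
          Real.continuousAt_rpow_const _ _ (Or.inl (hsp s hs.2).ne')
        exact continuousAt_const.mul (hc1.comp hb1)
      exact (((hder s hsT).2.continuousAt).sub h1).continuousWithinAt
    · -- strict initial gap in U
      have hAτ : A * (σ - τ₁) ^ (-al) = U 0 := by
        rw [hστ, hAdef, mul_assoc, ← Real.rpow_add hτ, add_neg_cancel, Real.rpow_zero,
          mul_one]
      have h4 := R4 τ₁ ⟨hτ₁.le, hτ₁T⟩
      have hpos : 0 < a * V 0 ^ p * τ₁ := by
        have := Real.rpow_pos_of_pos hV0 p
        positivity
      rw [hAτ]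
      linarith
    · -- strict initial gap in V
      have hBτ : B * (σ - τ₁) ^ (-be) = b * U 0 ^ q * τ₁ := by rw [hστ]; exact KI3.symm
      have h3 := R3 τ₁ ⟨hτ₁.le, hτ₁T⟩
      rw [hBτ]
      linarith
    · -- key monotonicity step
      intro s hs hpre
      have hsm : s ≤ m := hs.2
      have hsT : s < T := lt_of_le_of_lt hsm hmT
      have hmem : ∀ r ∈ Set.Icc τ₁ s, r ∈ Set.Ico (0:ℝ) T :=
        fun r hr => ⟨le_trans hτ₁.le hr.1, lt_of_le_of_lt hr.2 hsT⟩
      have hud : ∀ r ∈ Set.Icc τ₁ s,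
          HasDerivAt (fun t => A * (σ - t) ^ (-al)) (A * (al * (σ - r) ^ (-al - 1))) r := by
        intro r hr
        have hy : 0 < σ - r := hsp r (le_trans hr.2 hsm)
        have hbase : HasDerivAt (fun t : ℝ => σ - t) (-1) r := (hasDerivAt_id r).const_sub σ
        have hpow := Real.hasDerivAt_rpow_const (x := σ - r) (p := -al) (Or.inl hy.ne')
        have hcomp := (hpow.comp r hbase).const_mul A
        exact hcomp.congr_deriv (by ring)
      have hvd : ∀ r ∈ Set.Icc τ₁ s,
          HasDerivAt (fun t => B * (σ - t) ^ (-be)) (B * (be * (σ - r) ^ (-be - 1))) r := by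
        intro r hr
        have hy : 0 < σ - r := hsp r (le_trans hr.2 hsm)
        have hbase : HasDerivAt (fun t : ℝ => σ - t) (-1) r := (hasDerivAt_id r).const_sub σ
        have hpow := Real.hasDerivAt_rpow_const (x := σ - r) (p := -be) (Or.inl hy.ne')
        have hcomp := (hpow.comp r hbase).const_mul B
        exact hcomp.congr_deriv (by ring)
      constructor
      · refine mono_aux (f := fun t => U t - A * (σ - t) ^ (-al))
          (f' := fun r => U' r - A * (al * (σ - r) ^ (-al - 1))) hs.1.le
          (fun r hr => ((hder r (hmem r hr)).1).sub (hud r hr)) ?_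
        intro r hr
        have hrm : r ≤ m := le_trans hr.2.le hsm
        have hy : 0 < σ - r := hsp r hrm
        have hpr := hpre r ⟨hr.1.le, hr.2⟩
        have hur : A * (σ - r) ^ (-al) ≤ U r := by
          have := hpr.1; linarith
        have hvr : B * (σ - r) ^ (-be) ≤ V r := by
          have := hpr.2; linarith
        have hu0 : 0 < A * (σ - r) ^ (-al) := mul_pos hA (Real.rpow_pos_of_pos hy _)
        have hv0 : 0 < B * (σ - r) ^ (-be) := mul_pos hB (Real.rpow_pos_of_pos hy _)
        have hODI := hODIU r ⟨le_trans hτ₁.le hr.1.le, lt_trans hr.2 hsT⟩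
          (le_trans hu0.le hur) (le_trans hv0.le hvr)
        have hid : a * (B * (σ - r) ^ (-be)) ^ p = A * (al * (σ - r) ^ (-al - 1)) := by
          rw [Real.mul_rpow hB.le (Real.rpow_nonneg hy.le _), ← Real.rpow_mul hy.le]
          have hexp : -be * p = -al - 1 := by linarith [hbep]
          rw [hexp]
          linear_combination (-((σ - r) ^ (-al - 1))) * KI1
        have hmon : a * (B * (σ - r) ^ (-be)) ^ p ≤ a * V r ^ p :=
          mul_le_mul_of_nonneg_left (Real.rpow_le_rpow hv0.le hvr hp0.le) ha.le
        linarith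
      · refine mono_aux (f := fun t => V t - B * (σ - t) ^ (-be))
          (f' := fun r => V' r - B * (be * (σ - r) ^ (-be - 1))) hs.1.le
          (fun r hr => ((hder r (hmem r hr)).2).sub (hvd r hr)) ?_
        intro r hr
        have hrm : r ≤ m := le_trans hr.2.le hsm
        have hy : 0 < σ - r := hsp r hrm
        have hpr := hpre r ⟨hr.1.le, hr.2⟩
        have hur : A * (σ - r) ^ (-al) ≤ U r := by
          have := hpr.1; linarith
        have hvr : B * (σ - r) ^ (-be) ≤ V r := by
          have := hpr.2; linarith
        have hu0 : 0 < A * (σ - r) ^ (-al) := mul_pos hA (Real.rpow_pos_of_pos hy _)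
        have hv0 : 0 < B * (σ - r) ^ (-be) := mul_pos hB (Real.rpow_pos_of_pos hy _)
        have hODI := hODIV r ⟨le_trans hτ₁.le hr.1.le, lt_trans hr.2 hsT⟩
          (le_trans hu0.le hur) (le_trans hv0.le hvr)
        have hid : b * (A * (σ - r) ^ (-al)) ^ q = B * (be * (σ - r) ^ (-be - 1)) := by
          rw [Real.mul_rpow hA.le (Real.rpow_nonneg hy.le _), ← Real.rpow_mul hy.le]
          have hexp : -al * q = -be - 1 := by linarith [h1]
          rw [hexp]
          linear_combination ((σ - r) ^ (-be - 1)) * KI2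
        have hmon : b * (A * (σ - r) ^ (-al)) ^ q ≤ b * U r ^ q :=
          mul_le_mul_of_nonneg_left (Real.rpow_le_rpow hu0.le hur hq0.le) hb.le
        linarith
  -- blow-up contradiction at m
  have hfin := hustay m ⟨hτ₁m, le_refl m⟩
  have hσm : σ - m = δ := by rw [hmdef]; ring
  have hUm : A * δ ^ (-al) ≤ U m := by
    have := hfin.1
    rw [hσm] at this
    linarith
  have hδδ0 : δ ≤ δ0 := min_le_right _ _
  have hpow1 : δ ^ al ≤ δ0 ^ al := Real.rpow_le_rpow hδpos.le hδδ0 hal0.le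
  have hδ0al : δ0 ^ al = A / (M + 1) := by
    rw [hδ0def, ← Real.rpow_mul (by positivity : (0:ℝ) ≤ A / (M + 1)), one_div,
      inv_mul_cancel₀ hal0.ne', Real.rpow_one]
  have hMA : M + 1 ≤ A * δ ^ (-al) := by
    rw [Real.rpow_neg hδpos.le, mul_comm, ← div_eq_inv_mul,
      le_div_iff₀ (Real.rpow_pos_of_pos hδpos al)]
    calc (M + 1) * δ ^ al ≤ (M + 1) * (A / (M + 1)) :=
          mul_le_mul_of_nonneg_left (hpow1.trans_eq hδ0al) (by positivity)
      _ = A := by field_simp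
  have hUmM : U m ≤ M := hx₀max ⟨hm0, hmσ.le⟩
  linarith

theorem stmt_18 (n : ℕ) (hn : 1 ≤ n) (p q : ℝ) (hp : 1 ≤ p) (hq : 1 ≤ q) (hpq' : q ≤ p)
    (hpq : 1 < p * q) (β₁ β₂ : ℂ) (hβ₁ : β₁ ≠ 0) (hβ₂ : β₂ ≠ 0) (T : ℝ) (hT : 0 < T)
    (U V U' V' : ℝ → ℝ)
    (hder : ∀ t ∈ Set.Ico (0 : ℝ) T, HasDerivAt U (U' t) t ∧ HasDerivAt V (V' t) t)
    (hcont : ContinuousOn U' (Set.Ico 0 T) ∧ ContinuousOn V' (Set.Ico 0 T))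
    (hU0 : 0 < U 0) (hV0 : 0 < V 0)
    (hODIU : ∀ t ∈ Set.Ico (0 : ℝ) T, 0 ≤ U t → 0 ≤ V t →
      ‖β₁‖ ^ 2 * ‖β₂‖ ^ (-p) * (2 * Real.pi) ^ (-(n : ℝ) * (p - 1)) *
        V t ^ p ≤ U' t)
    (hODIV : ∀ t ∈ Set.Ico (0 : ℝ) T, 0 ≤ U t → 0 ≤ V t →
      ‖β₂‖ ^ 2 * ‖β₁‖ ^ (-q) * (2 * Real.pi) ^ (-(n : ℝ) * (q - 1)) *
        U t ^ q ≤ V' t)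
    (hinit : (‖β₁‖ ^ (2 + q) / (p + 1) * (2 * Real.pi) ^ (-(n : ℝ) * (q - 1))) *
        V 0 ^ (p + 1)
      ≤ (‖β₂‖ ^ (2 + p) / (q + 1) * (2 * Real.pi) ^ (-(n : ℝ) * (p - 1))) *
        U 0 ^ (q + 1))
    (hmax : ¬ ∃ (T' : ℝ) (U₁ V₁ U₁' V₁' : ℝ → ℝ), T < T' ∧
      (∀ t ∈ Set.Ico (0 : ℝ) T, U₁ t = U t ∧ V₁ t = V t) ∧
      (∀ t ∈ Set.Ico (0 : ℝ) T', HasDerivAt U₁ (U₁' t) t ∧ HasDerivAt V₁ (V₁' t) t) ∧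
      ContinuousOn U₁' (Set.Ico 0 T') ∧ ContinuousOn V₁' (Set.Ico 0 T') ∧
      (∀ t ∈ Set.Ico (0 : ℝ) T', 0 ≤ U₁ t → 0 ≤ V₁ t →
        ‖β₁‖ ^ 2 * ‖β₂‖ ^ (-p) * (2 * Real.pi) ^ (-(n : ℝ) * (p - 1)) *
          V₁ t ^ p ≤ U₁' t ∧
        ‖β₂‖ ^ 2 * ‖β₁‖ ^ (-q) * (2 * Real.pi) ^ (-(n : ℝ) * (q - 1)) *
          U₁ t ^ q ≤ V₁' t)) :
    T ≤ 2 ^ (p * q / (q + 1)) / (p * q - 1) *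
      (‖β₁‖ ^ 2 * ‖β₂‖ ^ (-p) * (2 * Real.pi) ^ (-(n : ℝ) * (p - 1)) /
        (p + 1)) ^ (-((1 : ℝ) / (p + 1))) *
      (‖β₂‖ ^ 2 * ‖β₁‖ ^ (-q) * (2 * Real.pi) ^ (-(n : ℝ) * (q - 1)) /
        (q + 1)) ^ (-(p / (p + 1))) *
      U 0 ^ (-((p * q - 1) / (p + 1))) := by
  have hb₁ : 0 < ‖β₁‖ := norm_pos_iff.mpr hβ₁
  have hb₂ : 0 < ‖β₂‖ := norm_pos_iff.mpr hβ₂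
  have h2π : (0:ℝ) < 2 * Real.pi := by positivity
  have ha : 0 < ‖β₁‖ ^ 2 * ‖β₂‖ ^ (-p) *
      (2 * Real.pi) ^ (-(n : ℝ) * (p - 1)) := by
    have h1 := Real.rpow_pos_of_pos hb₂ (-p)
    have h2 := Real.rpow_pos_of_pos h2π (-(n : ℝ) * (p - 1))
    positivity
  have hb : 0 < ‖β₂‖ ^ 2 * ‖β₁‖ ^ (-q) *
      (2 * Real.pi) ^ (-(n : ℝ) * (q - 1)) := by
    have h1 := Real.rpow_pos_of_pos hb₁ (-q)
    have h2 := Real.rpow_pos_of_pos h2π (-(n : ℝ) * (q - 1))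
    positivity
  exact lifespan_aux p q _ _ T hp hq hpq ha hb hT U V U' V' hder hU0 hV0 hODIU hODIV
end
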